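/- Let f and g be holomorphic function germs at 0 in ℂ. Then there exist holomorphic function germs a(w), b(z), e(z,w) at the origin such that the functions Z = z(1 + z f(z) + w a(w) + z w e(z,w)) and W = w(1 + w g(w) + z b(z) + z w e(z,w)) satisfy Z·W = z·w identically near (0,0). Moreover one may take a(w) = -g(w)/(1 + w g(w)) and b(z) = -f(z)/(1 + z f(z)). -/

import Mathlib

/-!
With `F = 1 + z f(z)`, `G = 1 + w g(w)` and the prescribed `a`, `b`, the two factors
`A = F + w a(w)` and `B = G + z b(z)` satisfy `A B = 1 + z w C` with `C` holomorphic.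
Writing `Z W = z w (A + z w e)(B + z w e)`, the identity `Z W = z w` becomes the quadratic
equation `z w e² + (A + B) e + C = 0` for `e`. Since its leading coefficient vanishes at the
origin while `A + B = 2` there, the root `e = -2C / (S (1 + √(1 - 4 z w C / S²)))`,
`S = A + B`, is holomorphic near the origin.
-/

open Filter Topology

section

variable {E : Type*} [NormedAddCommGroup E] [NormedSpace ℂ E] {x : E}

theorem exists_analyticAt_sq_eq_one_add {u : E → ℂ} (hu : AnalyticAt ℂ u x) (hux : u x = 0) :
    ∃ r : E → ℂ, AnalyticAt ℂ r x ∧ r x = 1 ∧ ∀ y, r y ^ 2 = 1 + u y := by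
  refine ⟨fun y => (1 + u y) ^ (2⁻¹ : ℂ), ?_, by simp [hux], fun y => by simp⟩
  exact (analyticAt_const.add hu).cpow analyticAt_const (by simp [hux])

theorem exists_analyticAt_quadratic_root {S C m : E → ℂ} (hS : AnalyticAt ℂ S x)
    (hC : AnalyticAt ℂ C x) (hm : AnalyticAt ℂ m x) (hSx : S x ≠ 0) (hmx : m x = 0) :
    ∃ e : E → ℂ, AnalyticAt ℂ e x ∧ ∀ᶠ y in 𝓝 x, m y * e y ^ 2 + S y * e y + C y = 0 := by
  obtain ⟨r, hr, hrx, hr_sq⟩ :=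
    exists_analyticAt_sq_eq_one_add (u := fun y => -4 * m y * C y / S y ^ 2)
      (by fun_prop (disch := simpa using hSx)) (by simp [hmx])
  have h1r : 1 + r x ≠ 0 := by norm_num [hrx]
  -- the quadratic formula with the numerator rationalized, so that nothing degenerates at `m = 0`
  refine ⟨fun y => -2 * C y / (S y * (1 + r y)),
    by fun_prop (disch := exact mul_ne_zero hSx h1r), ?_⟩
  filter_upwards [hS.continuousAt.eventually_ne hSx,
    (analyticAt_const.add hr).continuousAt.eventually_ne h1r] with y hSy h1ry
  have h1ry : 1 + r y ≠ 0 := h1ry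
  have hr_sq_y := hr_sq y
  field_simp at hr_sq_y ⊢
  linear_combination C y * hr_sq_y

theorem exists_analyticAt_add_mul_mul_add_mul_eq_one {A B C m : E → ℂ} (hA : AnalyticAt ℂ A x)
    (hB : AnalyticAt ℂ B x) (hC : AnalyticAt ℂ C x) (hm : AnalyticAt ℂ m x)
    (hABx : A x + B x ≠ 0) (hmx : m x = 0) (hAB : ∀ᶠ y in 𝓝 x, A y * B y = 1 + m y * C y) :
    ∃ e : E → ℂ, AnalyticAt ℂ e x ∧
      ∀ᶠ y in 𝓝 x, (A y + m y * e y) * (B y + m y * e y) = 1 := by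
  obtain ⟨e, he, he_root⟩ := exists_analyticAt_quadratic_root (hA.add hB) hC hm hABx hmx
  refine ⟨e, he, ?_⟩
  filter_upwards [hAB, he_root] with y hABy he_root_y
  simp only [Pi.add_apply] at he_root_y
  linear_combination hABy + m y * he_root_y

end

theorem plumbing_factors_mul_eq {K : Type*} [Field K] {z w f g : K} (hF : 1 + z * f ≠ 0)
    (hG : 1 + w * g ≠ 0) :
    (1 + z * f + w * (-g / (1 + w * g))) * (1 + w * g + z * (-f / (1 + z * f))) =
      1 + z * w * (f * g * ((1 + z * f) * (1 + w * g) + 1) / ((1 + z * f) * (1 + w * g))) := by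
  field_simp
  ring

attribute [local fun_prop] analyticAt_fst analyticAt_snd

/-- Normal-form lemma for plumbing coordinates: separate holomorphic coordinate
changes `z ↦ z(1+zf(z))`, `w ↦ w(1+wg(w))` extend to `Z`, `W` with `Z·W = z·w`,
with `a(w) = -g(w)/(1+wg(w))` and `b(z) = -f(z)/(1+zf(z))`. -/
theorem plumbing_normal_form (f g : ℂ → ℂ)
    (hf : AnalyticAt ℂ f 0) (hg : AnalyticAt ℂ g 0) :
    ∃ a b : ℂ → ℂ, ∃ e : ℂ × ℂ → ℂ,
      AnalyticAt ℂ a 0 ∧ AnalyticAt ℂ b 0 ∧ AnalyticAt ℂ e (0, 0) ∧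
      (∀ᶠ w in 𝓝 (0 : ℂ), a w = -g w / (1 + w * g w)) ∧
      (∀ᶠ z in 𝓝 (0 : ℂ), b z = -f z / (1 + z * f z)) ∧
      (∀ᶠ p : ℂ × ℂ in 𝓝 (0, 0),
        (p.1 * (1 + p.1 * f p.1 + p.2 * a p.2 + p.1 * p.2 * e p)) *
          (p.2 * (1 + p.2 * g p.2 + p.1 * b p.1 + p.1 * p.2 * e p)) = p.1 * p.2) := by
  set F : ℂ → ℂ := fun z => 1 + z * f z
  set G : ℂ → ℂ := fun w => 1 + w * g w
  have hF0 : F 0 ≠ 0 := by simp [F]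
  have hG0 : G 0 ≠ 0 := by simp [G]
  set a : ℂ → ℂ := fun w => -g w / G w
  set b : ℂ → ℂ := fun z => -f z / F z
  have hFG : ∀ᶠ p : ℂ × ℂ in 𝓝 (0, 0), F p.1 ≠ 0 ∧ G p.2 ≠ 0 := by
    have hF1 : AnalyticAt ℂ (fun p : ℂ × ℂ => F p.1) (0, 0) := by fun_prop
    have hG2 : AnalyticAt ℂ (fun p : ℂ × ℂ => G p.2) (0, 0) := by fun_prop
    exact (hF1.continuousAt.eventually_ne hF0).and (hG2.continuousAt.eventually_ne hG0)
  obtain ⟨e, he, hZW⟩ := exists_analyticAt_add_mul_mul_add_mul_eq_one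
    (A := fun p : ℂ × ℂ => F p.1 + p.2 * a p.2) (B := fun p => G p.2 + p.1 * b p.1)
    (C := fun p => f p.1 * g p.2 * (F p.1 * G p.2 + 1) / (F p.1 * G p.2))
    (m := fun p => p.1 * p.2) (x := (0, 0)) (by fun_prop) (by fun_prop)
    (by fun_prop (disch := exact mul_ne_zero hF0 hG0)) (by fun_prop) (by simp [F, G]) (by simp)
    (hFG.mono fun _ hp => plumbing_factors_mul_eq hp.1 hp.2)
  refine ⟨a, b, e, by fun_prop (disch := exact hG0), by fun_prop (disch := exact hF0), he,
    .of_forall fun _ => rfl, .of_forall fun _ => rfl, ?_⟩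
  filter_upwards [hZW] with p hp
  linear_combination p.1 * p.2 * hp
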